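/- arXiv:0710.4245 — 2 statements merged into one kernel-verified Lean document; each statement's English description precedes it below -/
import Mathlib

section
/- Second moment of the Poisson Estimator (conditional on the path): if κ has the Poisson distribution with mean λt for some λ > 0 and c ∈ ℝ is arbitrary, then the Poisson Estimator PE = e^{(λ−c)t} · λ^{−κ} · ∏_{j=1}^{κ} (c − h(ψ_j)) satisfies E[PE²] = exp( (λ − 2c)t + (1/λ) ∫_0^t (c − h(s))² ds ). -/
/-!
Conditioning on `κ = k`, independence turns `E[PE²; κ = k]` into
`P(κ = k) · e^{2(λ-c)t} · (E[(c - h(ψ))²] / λ²)^k` with `E[(c - h(ψ))²] = I / t`,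
where `I = ∫_0^t (c - h)²`. Summing against the Poisson weights is the generating function
`E[z^κ] = e^{λt(z-1)}` at `z = I / (λ² t)`, and `2(λ - c)t + λt(z - 1) = (λ - 2c)t + I/λ`.
-/

open MeasureTheory ProbabilityTheory Real Finset
open scoped ENNReal

section

variable {Ω : Type*} [MeasurableSpace Ω] {P : Measure Ω}

theorem ProbabilityTheory.IndepFun.lintegral_comp_eq_tsum_mul_lintegral [IsFiniteMeasure P]
    {α β : Type*} [MeasurableSpace α] [Countable α] [MeasurableSingletonClass α]
    [MeasurableSpace β] {X : Ω → α} {Y : Ω → β} (hXY : IndepFun X Y P)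
    (hX : Measurable X) (hY : Measurable Y) {G : α → β → ℝ≥0∞} (hG : ∀ a, Measurable (G a)) :
    ∫⁻ ω, G (X ω) (Y ω) ∂P = ∑' a, P (X ⁻¹' {a}) * ∫⁻ ω, G a (Y ω) ∂P := by
  have hGm : Measurable (Function.uncurry G) := measurable_from_prod_countable_right hG
  calc ∫⁻ ω, G (X ω) (Y ω) ∂P
      = ∫⁻ p, Function.uncurry G p ∂(P.map fun ω => (X ω, Y ω)) :=
        (lintegral_map hGm (hX.prodMk hY)).symm
    _ = ∫⁻ a, ∫⁻ y, G a y ∂(P.map Y) ∂(P.map X) := by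
        rw [(indepFun_iff_map_prod_eq_prod_map_map hX.aemeasurable hY.aemeasurable).1 hXY,
          lintegral_prod _ hGm.aemeasurable]
        rfl
    _ = ∑' a, P (X ⁻¹' {a}) * ∫⁻ ω, G a (Y ω) ∂P := by
        rw [lintegral_countable']
        congr 1 with a
        rw [mul_comm, Measure.map_apply hX (measurableSet_singleton a), lintegral_map (hG a) hY]

theorem lintegral_prod_range_eq_exp_of_poisson {Y : ℕ → Ω → ℝ≥0∞} (hYindep : iIndepFun Y P)
    (hY : ∀ j, Measurable (Y j)) {z : ℝ} (hz : 0 ≤ z)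
    (hYmean : ∀ j, ∫⁻ ω, Y j ω ∂P = ENNReal.ofReal z)
    {κ : Ω → ℕ} (hκY : IndepFun κ (fun ω j => Y j ω) P) (hκ : Measurable κ) {m : ℝ} (hm : 0 ≤ m)
    (hκlaw : ∀ k : ℕ, P {ω | κ ω = k} = ENNReal.ofReal (exp (-m) * m ^ k / k.factorial)) :
    ∫⁻ ω, ∏ j ∈ range (κ ω), Y j ω ∂P = ENNReal.ofReal (exp (m * (z - 1))) := by
  have := hYindep.isProbabilityMeasure
  rw [hκY.lintegral_comp_eq_tsum_mul_lintegral hκ (measurable_pi_lambda _ hY)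
    (G := fun k y => ∏ j ∈ range k, y j) fun k => by fun_prop]
  have hterm : ∀ k : ℕ, P (κ ⁻¹' {k}) * ∫⁻ ω, ∏ j ∈ range k, Y j ω ∂P
      = ENNReal.ofReal (exp (-m) * ((m * z) ^ k / k.factorial)) := by
    intro k
    rw [lintegral_prod_eq_prod_lintegral_of_indepFun _ _ hYindep hY]
    simp only [hYmean, prod_const, card_range]
    rw [show κ ⁻¹' {k} = {ω | κ ω = k} from rfl, hκlaw, ← ENNReal.ofReal_pow hz,
      ← ENNReal.ofReal_mul (by positivity)]
    congr 1
    ring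
  simp_rw [hterm]
  rw [← ENNReal.ofReal_tsum_of_nonneg (fun k => by positivity)
      ((Real.summable_pow_div_factorial _).mul_left _),
    ((NormedSpace.expSeries_div_hasSum_exp (m * z)).mul_left (exp (-m))).tsum_eq,
    ← Real.exp_eq_exp_ℝ, ← Real.exp_add]
  congr 2
  ring

theorem lintegral_ofReal_comp_of_map_eq_uniform {X : Ω → ℝ} (hX : Measurable X) {t : ℝ}
    (ht : 0 < t)
    (hXlaw : P.map X = (ENNReal.ofReal t)⁻¹ • volume.restrict (Set.Icc (0 : ℝ) t))
    {f : ℝ → ℝ} (hf : Measurable f) (hf0 : ∀ s, 0 ≤ f s) (hfint : IntegrableOn f (Set.Icc 0 t)) :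
    ∫⁻ ω, ENNReal.ofReal (f (X ω)) ∂P = ENNReal.ofReal ((∫ s in (0 : ℝ)..t, f s) / t) := by
  rw [← lintegral_map (f := fun s => ENNReal.ofReal (f s)) (ENNReal.measurable_ofReal.comp hf) hX,
    hXlaw, lintegral_smul_measure, ← ofReal_integral_eq_lintegral_ofReal hfint (ae_of_all _ hf0),
    intervalIntegral.integral_of_le ht.le, ← integral_Icc_eq_integral_Ioc, div_eq_inv_mul,
    ENNReal.ofReal_mul (inv_nonneg.2 ht.le), ENNReal.ofReal_inv_of_pos ht, smul_eq_mul]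

end

theorem integrableOn_Icc_sq_sub_of_abs_le {h : ℝ → ℝ} (hmeas : Measurable h) (a b c C : ℝ)
    (hbd : ∀ s ∈ Set.Icc a b, |h s| ≤ C) :
    IntegrableOn (fun s => (c - h s) ^ 2) (Set.Icc a b) := by
  refine Measure.integrableOn_of_bounded (M := (|c| + C) ^ 2) (by simp)
    (by fun_prop : Measurable fun s => (c - h s) ^ 2).aestronglyMeasurable ?_
  filter_upwards [ae_restrict_mem measurableSet_Icc] with s hs
  have : |c - h s| ≤ |c| + C := (abs_sub _ _).trans (by linarith [hbd s hs])
  rw [Real.norm_eq_abs, abs_sq, ← sq_abs (c - h s)]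
  gcongr

theorem sq_exp_mul_inv_pow_mul_prod (a lam : ℝ) (k : ℕ) (x : ℕ → ℝ) :
    (exp a * (lam ^ k)⁻¹ * ∏ j ∈ range k, x j) ^ 2
      = exp (2 * a) * ∏ j ∈ range k, x j ^ 2 / lam ^ 2 := by
  rw [show exp (2 * a) = exp a ^ 2 by rw [← exp_nat_mul]; norm_num]
  simp only [div_eq_mul_inv, prod_mul_distrib, prod_pow, prod_const, card_range]
  ring

theorem poisson_estimator_second_moment_general
    {Ω : Type*} [MeasurableSpace Ω] (P : Measure Ω)
    (t : ℝ) (ht : 0 < t)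
    (h : ℝ → ℝ) (hmeas : Measurable h)
    (Ch : ℝ) (hbd : ∀ s ∈ Set.Icc (0 : ℝ) t, |h s| ≤ Ch)
    (ψ : ℕ → Ω → ℝ) (hψmeas : ∀ j, Measurable (ψ j))
    (hψlaw : ∀ j, Measure.map (ψ j) P
      = (ENNReal.ofReal t)⁻¹ • volume.restrict (Set.Icc (0 : ℝ) t))
    (hψindep : iIndepFun ψ P)
    (κ : Ω → ℕ) (hκmeas : Measurable κ)
    (hκψindep : IndepFun κ (fun ω => fun j => ψ j ω) P)
    (lam c : ℝ) (hlam : 0 < lam)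
    (hκlaw : ∀ k : ℕ, P {ω | κ ω = k}
      = ENNReal.ofReal (Real.exp (-(lam * t)) * (lam * t) ^ k / Nat.factorial k)) :
    ∫⁻ ω, ENNReal.ofReal ((Real.exp ((lam - c) * t) * (lam ^ κ ω)⁻¹
        * ∏ j ∈ Finset.range (κ ω), (c - h (ψ j ω))) ^ 2) ∂P
      = ENNReal.ofReal (Real.exp ((lam - 2 * c) * t
          + (1 / lam) * ∫ s in (0 : ℝ)..t, (c - h s) ^ 2)) := by
  set I := ∫ s in (0 : ℝ)..t, (c - h s) ^ 2
  have hI : 0 ≤ I := intervalIntegral.integral_nonneg ht.le fun s _ => sq_nonneg _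
  have hg : Measurable fun s => ENNReal.ofReal ((c - h s) ^ 2 / lam ^ 2) := by fun_prop
  have hmean : ∀ j, ∫⁻ ω, ENNReal.ofReal ((c - h (ψ j ω)) ^ 2 / lam ^ 2) ∂P
      = ENNReal.ofReal (I / lam ^ 2 / t) := by
    intro j
    rw [lintegral_ofReal_comp_of_map_eq_uniform (hψmeas j) ht (hψlaw j) (by fun_prop)
      (fun s => by positivity) ((integrableOn_Icc_sq_sub_of_abs_le hmeas 0 t c Ch hbd).div_const _),
      intervalIntegral.integral_div]
  have hG : Measurable fun (x : ℕ → ℝ) j => ENNReal.ofReal ((c - h (x j)) ^ 2 / lam ^ 2) := by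
    fun_prop
  have hκY : IndepFun κ (fun ω j => ENNReal.ofReal ((c - h (ψ j ω)) ^ 2 / lam ^ 2)) P :=
    hκψindep.comp measurable_id hG
  simp_rw [sq_exp_mul_inv_pow_mul_prod, ENNReal.ofReal_mul (exp_pos _).le,
    ENNReal.ofReal_prod_of_nonneg fun j _ => div_nonneg (sq_nonneg _) (sq_nonneg _)]
  rw [lintegral_const_mul' _ _ ENNReal.ofReal_ne_top,
    lintegral_prod_range_eq_exp_of_poisson
      (Y := fun j ω => ENNReal.ofReal ((c - h (ψ j ω)) ^ 2 / lam ^ 2)) (hψindep.comp _ fun _ => hg)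
      (fun j => hg.comp (hψmeas j)) (by positivity) hmean hκY hκmeas (by positivity) hκlaw,
    ← ENNReal.ofReal_mul (exp_pos _).le, ← Real.exp_add]
  congr 2
  field_simp
  ring

/-- Second moment of the Poisson Estimator (conditional on the path): if `κ`
is Poisson with mean `λt` for some `λ > 0` and `c` is arbitrary, then
`PE = e^{(λ-c)t} λ^{-κ} ∏_{j=1}^{κ} (c - h(ψ_j))` satisfies
`E[PE²] = exp((λ - 2c)t + (1/λ) ∫_0^t (c - h(s))² ds)`, where the `ψ_j` are
i.i.d. uniform on `[0,t]`, independent of `κ`. -/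
theorem poisson_estimator_second_moment
    {Ω : Type*} [MeasurableSpace Ω] (P : Measure Ω) [IsProbabilityMeasure P]
    (t : ℝ) (ht : 0 < t)
    (h : ℝ → ℝ) (hmeas : Measurable h)
    (Ch : ℝ) (hbd : ∀ s ∈ Set.Icc (0 : ℝ) t, |h s| ≤ Ch)
    (ψ : ℕ → Ω → ℝ) (hψmeas : ∀ j, Measurable (ψ j))
    (hψlaw : ∀ j, Measure.map (ψ j) P
      = (ENNReal.ofReal t)⁻¹ • volume.restrict (Set.Icc (0 : ℝ) t))
    (hψindep : iIndepFun ψ P)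
    (κ : Ω → ℕ) (hκmeas : Measurable κ)
    (hκψindep : IndepFun κ (fun ω => fun j => ψ j ω) P)
    (lam c : ℝ) (hlam : 0 < lam)
    (hκlaw : ∀ k : ℕ, P {ω | κ ω = k}
      = ENNReal.ofReal (Real.exp (-(lam * t)) * (lam * t) ^ k / Nat.factorial k)) :
    ∫⁻ ω, ENNReal.ofReal ((Real.exp ((lam - c) * t) * (lam ^ κ ω)⁻¹
        * ∏ j ∈ Finset.range (κ ω), (c - h (ψ j ω))) ^ 2) ∂P
      = ENNReal.ofReal (Real.exp ((lam - 2 * c) * t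
          + (1 / lam) * ∫ s in (0 : ℝ)..t, (c - h s) ^ 2)) :=
  poisson_estimator_second_moment_general P t ht h hmeas Ch hbd ψ hψmeas hψlaw hψindep κ hκmeas
    hκψindep lam c hlam hκlaw
end

section
/- Unbiasedness of GPE-2 (conditional on the path): let β > 0 and γ > 0, and let κ have the negative binomial probability mass function with mean γ and dispersion β, i.e. p(k) = ( Γ(β+k) / (Γ(β) k!) ) · ( β/(β+γ) )^{β} · ( γ/(β+γ) )^{k} for k ∈ ℕ. If U ≥ sup_{s∈[0,t]} h(s), then E[ e^{−Ut} · ( t^{κ} Γ(β) (β+γ)^{β+κ} ) / ( Γ(β+κ) β^{β} γ^{κ} ) · ∏_{j=1}^{κ} (U − h(ψ_j)) ] = exp( −∫_0^t h(s) ds ). -/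
/-!
Conditionally on `κ = k`, independence of the `ψ_j` makes the product contribute `(J / t) ^ k`,
where `J = ∫_0^t (U - h) ≥ 0`. The GPE-2 weight is the negative binomial probability of `k`
traded for the Poisson weight `e^{-Ut} t^k / k!`, so the expectation is
`e^{-Ut} ∑ J^k / k! = e^{-Ut} e^J = exp(-∫_0^t h)`. Since `U ≥ h` on `[0, t]` the integrand is
nonnegative, so the computation can be done with lintegrals, free of integrability conditions.
-/

open MeasureTheory ProbabilityTheory Real Finset
open scoped ENNReal

section
variable {Ω : Type*} [MeasurableSpace Ω] {P : Measure Ω}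

theorem ae_mem_of_map_eq_smul_restrict {α : Type*} [MeasurableSpace α] {X : Ω → α}
    (hX : Measurable X) {c : ℝ≥0∞} {μ : Measure α} {s : Set α} (hs : MeasurableSet s)
    (hlaw : P.map X = c • μ.restrict s) : ∀ᵐ ω ∂P, X ω ∈ s :=
  ae_of_ae_map hX.aemeasurable (hlaw ▸ Measure.ae_smul_measure (ae_restrict_mem hs) c)

theorem lintegral_comp_eq_tsum_of_indepFun [IsFiniteMeasure P] {ι β : Type*} [Countable ι]
    [MeasurableSpace ι] [MeasurableSingletonClass ι] [MeasurableSpace β]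
    {N : Ω → ι} {Y : Ω → β} (hN : Measurable N) (hY : Measurable Y) (hNY : IndepFun N Y P)
    {G : ι → β → ℝ≥0∞} (hG : ∀ i, Measurable (G i)) :
    ∫⁻ ω, G (N ω) (Y ω) ∂P = ∑' i, P {ω | N ω = i} * ∫⁻ ω, G i (Y ω) ∂P := by
  have hG' : Measurable (Function.uncurry G) := measurable_from_prod_countable_right hG
  calc ∫⁻ ω, G (N ω) (Y ω) ∂P
      = ∫⁻ p, Function.uncurry G p ∂(P.map N).prod (P.map Y) := by
        rw [← (indepFun_iff_map_prod_eq_prod_map_map hN.aemeasurable hY.aemeasurable).1 hNY,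
          lintegral_map hG' (hN.prodMk hY)]
        rfl
    _ = ∑' i, P {ω | N ω = i} * ∫⁻ ω, G i (Y ω) ∂P := by
        rw [lintegral_prod _ hG'.aemeasurable, lintegral_countable']
        refine tsum_congr fun i => ?_
        rw [mul_comm, Measure.map_apply hN (measurableSet_singleton i), ← lintegral_map (hG i) hY]
        rfl

theorem measurable_apply_of_countable {ι β γ : Type*} [Countable ι] [MeasurableSpace ι]
    [MeasurableSingletonClass ι] [MeasurableSpace β] [MeasurableSpace γ] {N : Ω → ι} {Y : Ω → β}
    (hN : Measurable N) (hY : Measurable Y) {G : ι → β → γ} (hG : ∀ i, Measurable (G i)) :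
    Measurable fun ω => G (N ω) (Y ω) :=
  (measurable_from_prod_countable_right (f := Function.uncurry G) hG).comp (hN.prodMk hY)

theorem lintegral_ofReal_comp_of_map_eq_uniform_s8 {X : Ω → ℝ} (hX : Measurable X) {a b : ℝ}
    (hab : a < b) (hlaw : P.map X = (ENNReal.ofReal (b - a))⁻¹ • volume.restrict (Set.Icc a b))
    {g : ℝ → ℝ} (hg : Measurable g) (hg0 : ∀ x ∈ Set.Icc a b, 0 ≤ g x)
    (hgi : IntegrableOn g (Set.Icc a b)) :
    ∫⁻ ω, ENNReal.ofReal (g (X ω)) ∂P = ENNReal.ofReal ((∫ x in Set.Icc a b, g x) / (b - a)) := by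
  rw [← lintegral_map hg.ennreal_ofReal hX, hlaw, lintegral_smul_measure,
    ← ofReal_integral_eq_lintegral_ofReal hgi ((ae_restrict_iff' measurableSet_Icc).2
      (ae_of_all _ hg0)), ENNReal.ofReal_div_of_pos (sub_pos.2 hab), div_eq_mul_inv, mul_comm,
    smul_eq_mul]

theorem lintegral_ofReal_prod_of_iIndepFun_uniform {ι : Type*} {X : ι → Ω → ℝ}
    (hX : ∀ j, Measurable (X j)) (hind : iIndepFun X P) {a b : ℝ} (hab : a < b)
    (hlaw : ∀ j, P.map (X j) = (ENNReal.ofReal (b - a))⁻¹ • volume.restrict (Set.Icc a b))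
    {g : ℝ → ℝ} (hg : Measurable g) (hg0 : ∀ x ∈ Set.Icc a b, 0 ≤ g x)
    (hgi : IntegrableOn g (Set.Icc a b)) (s : Finset ι) :
    ∫⁻ ω, ENNReal.ofReal (∏ j ∈ s, g (X j ω)) ∂P
      = ENNReal.ofReal ((∫ x in Set.Icc a b, g x) / (b - a)) ^ #s := by
  have hmem : ∀ᵐ ω ∂P, ∀ j ∈ s, X j ω ∈ Set.Icc a b :=
    (Filter.eventually_all_finset s).2 fun j _ =>
      ae_mem_of_map_eq_smul_restrict (hX j) measurableSet_Icc (hlaw j)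
  calc ∫⁻ ω, ENNReal.ofReal (∏ j ∈ s, g (X j ω)) ∂P
      = ∫⁻ ω, ∏ j ∈ s, ENNReal.ofReal (g (X j ω)) ∂P := by
        refine lintegral_congr_ae ?_
        filter_upwards [hmem] with ω hω
        exact ENNReal.ofReal_prod_of_nonneg fun j hj => hg0 _ (hω j hj)
    _ = ∏ j ∈ s, ∫⁻ ω, ENNReal.ofReal (g (X j ω)) ∂P :=
        lintegral_prod_eq_prod_lintegral_of_indepFun s _
          (hind.comp _ fun _ => hg.ennreal_ofReal) fun j => hg.ennreal_ofReal.comp (hX j)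
    _ = _ := by
        rw [Finset.prod_congr rfl fun j _ =>
          lintegral_ofReal_comp_of_map_eq_uniform_s8 (hX j) hab (hlaw j) hg hg0 hgi, prod_const]

theorem lintegral_ofReal_mul_prod_range_of_indepFun_uniform {N : Ω → ℕ} (hN : Measurable N)
    {X : ℕ → Ω → ℝ} (hX : ∀ j, Measurable (X j)) (hind : iIndepFun X P)
    (hNX : IndepFun N (fun ω j => X j ω) P) {a b : ℝ} (hab : a < b)
    (hlaw : ∀ j, P.map (X j) = (ENNReal.ofReal (b - a))⁻¹ • volume.restrict (Set.Icc a b))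
    {g : ℝ → ℝ} (hg : Measurable g) (hg0 : ∀ x ∈ Set.Icc a b, 0 ≤ g x)
    (hgi : IntegrableOn g (Set.Icc a b)) {c : ℕ → ℝ} (hc : ∀ k, 0 ≤ c k) :
    ∫⁻ ω, ENNReal.ofReal (c (N ω) * ∏ j ∈ range (N ω), g (X j ω)) ∂P
      = ∑' k, P {ω | N ω = k}
          * ENNReal.ofReal (c k * ((∫ x in Set.Icc a b, g x) / (b - a)) ^ k) := by
  have := hind.isProbabilityMeasure
  have hmean : 0 ≤ (∫ x in Set.Icc a b, g x) / (b - a) :=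
    div_nonneg (setIntegral_nonneg measurableSet_Icc hg0) (sub_pos.2 hab).le
  refine (lintegral_comp_eq_tsum_of_indepFun
    (G := fun k v => ENNReal.ofReal (c k * ∏ j ∈ range k, g (v j)))
    hN (measurable_pi_lambda _ hX) hNX fun k => by fun_prop).trans (tsum_congr fun k => ?_)
  simp_rw [ENNReal.ofReal_mul (hc k)]
  rw [lintegral_const_mul' _ _ ENNReal.ofReal_ne_top,
    lintegral_ofReal_prod_of_iIndepFun_uniform hX hind hab hlaw hg hg0 hgi, card_range,
    ENNReal.ofReal_pow hmean]
end

theorem ENNReal.tsum_ofReal_mul_pow_div_factorial {c x : ℝ} (hc : 0 ≤ c) (hx : 0 ≤ x) :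
    ∑' k : ℕ, ENNReal.ofReal (c * (x ^ k / k.factorial)) = ENNReal.ofReal (c * Real.exp x) := by
  rw [← ENNReal.ofReal_tsum_of_nonneg (fun k => by positivity)
    ((Real.summable_pow_div_factorial x).mul_left c), tsum_mul_left, Real.exp_eq_exp_ℝ,
    NormedSpace.exp_eq_tsum_div]

theorem setIntegral_Icc_const_sub {f : ℝ → ℝ} {a b : ℝ} (hab : a ≤ b)
    (hf : IntegrableOn f (Set.Icc a b)) (C : ℝ) :
    ∫ x in Set.Icc a b, (C - f x) = C * (b - a) - ∫ x in a..b, f x := by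
  have hC : IntegrableOn (fun _ => C) (Set.Icc a b) := integrableOn_const measure_Icc_lt_top.ne
  rw [intervalIntegral.integral_of_le hab, ← integral_Icc_eq_integral_Ioc,
    integral_sub hC hf, setIntegral_const,
    Real.volume_real_Icc_of_le hab, smul_eq_mul, mul_comm]

noncomputable def negBinomialPMF (β γ : ℝ) (k : ℕ) : ℝ :=
  Real.Gamma (β + k) / (Real.Gamma β * k.factorial) * (β / (β + γ)) ^ β * (γ / (β + γ)) ^ k

/-- `e^{-Ut} t^k / (k! · negBinomialPMF β γ k)`, the weight of GPE-2 on the event `κ = k`. -/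
noncomputable def gpe2Weight (β γ t U : ℝ) (k : ℕ) : ℝ :=
  Real.exp (-(U * t)) * (t ^ k * Real.Gamma β * (β + γ) ^ (β + (k : ℝ)))
    / (Real.Gamma (β + (k : ℝ)) * β ^ β * γ ^ k)

theorem gpe2Weight_nonneg {β γ : ℝ} (hβ : 0 < β) (hγ : 0 < γ) {t : ℝ} (ht : 0 ≤ t) (U : ℝ)
    (k : ℕ) : 0 ≤ gpe2Weight β γ t U k := by
  have := Real.Gamma_pos_of_pos hβ
  have := Real.Gamma_pos_of_pos (by positivity : 0 < β + k)
  unfold gpe2Weight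
  positivity

theorem negBinomialPMF_mul_gpe2Weight_mul_pow {β γ : ℝ} (hβ : 0 < β) (hγ : 0 < γ) {t : ℝ}
    (ht : t ≠ 0) (U x : ℝ) (k : ℕ) :
    negBinomialPMF β γ k * (gpe2Weight β γ t U k * (x / t) ^ k)
      = Real.exp (-(U * t)) * (x ^ k / k.factorial) := by
  have hβγ : 0 < β + γ := by positivity
  have := (Real.Gamma_pos_of_pos hβ).ne'
  have := (Real.Gamma_pos_of_pos (by positivity : 0 < β + k)).ne'
  have := (Real.rpow_pos_of_pos hβ β).ne'
  have := (Real.rpow_pos_of_pos hβγ β).ne'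
  unfold negBinomialPMF gpe2Weight
  rw [Real.rpow_add hβγ, Real.rpow_natCast, Real.div_rpow hβ.le hβγ.le, div_pow, div_pow]
  field_simp

/-- Unbiasedness of GPE-2 (conditional on the path): let `β, γ > 0` and let `κ`
have the negative binomial probability mass function with mean `γ` and
dispersion `β`, i.e. `p(k) = (Γ(β+k) / (Γ(β) k!)) (β/(β+γ))^β (γ/(β+γ))^k`.
If `U ≥ sup_{s ∈ [0,t]} h(s)`, then
`E[ e^{-Ut} (t^κ Γ(β) (β+γ)^{β+κ}) / (Γ(β+κ) β^β γ^κ) ∏_{j=1}^{κ} (U - h(ψ_j)) ]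
  = exp(-∫_0^t h(s) ds)`,
where the `ψ_j` are i.i.d. uniform on `[0,t]`, independent of `κ`. -/
theorem gpe2_unbiased
    {Ω : Type*} [MeasurableSpace Ω] (P : Measure Ω) [IsProbabilityMeasure P]
    (t : ℝ) (ht : 0 < t)
    (h : ℝ → ℝ) (hmeas : Measurable h)
    (Ch : ℝ) (hbd : ∀ s ∈ Set.Icc (0 : ℝ) t, |h s| ≤ Ch)
    (ψ : ℕ → Ω → ℝ) (hψmeas : ∀ j, Measurable (ψ j))
    (hψlaw : ∀ j, Measure.map (ψ j) P
      = (ENNReal.ofReal t)⁻¹ • volume.restrict (Set.Icc (0 : ℝ) t))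
    (hψindep : iIndepFun ψ P)
    (κ : Ω → ℕ) (hκmeas : Measurable κ)
    (hκψindep : IndepFun κ (fun ω => fun j => ψ j ω) P)
    (β γ : ℝ) (hβ : 0 < β) (hγ : 0 < γ)
    (hκlaw : ∀ k : ℕ, P {ω | κ ω = k}
      = ENNReal.ofReal ((Real.Gamma (β + k) / (Real.Gamma β * Nat.factorial k))
          * (β / (β + γ)) ^ β * (γ / (β + γ)) ^ k))
    (U : ℝ) (hU : ∀ s ∈ Set.Icc (0 : ℝ) t, h s ≤ U) :
    ∫ ω, Real.exp (-(U * t))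
        * (t ^ κ ω * Real.Gamma β * (β + γ) ^ (β + (κ ω : ℝ)))
        / (Real.Gamma (β + (κ ω : ℝ)) * β ^ β * γ ^ κ ω)
        * ∏ j ∈ Finset.range (κ ω), (U - h (ψ j ω)) ∂P
      = Real.exp (-∫ s in (0 : ℝ)..t, h s) := by
  have hUh : ∀ x ∈ Set.Icc 0 t, 0 ≤ U - h x := fun x hx => sub_nonneg.2 (hU x hx)
  have hhi : IntegrableOn h (Set.Icc 0 t) := IntegrableOn.of_bound measure_Icc_lt_top
    hmeas.aestronglyMeasurable Ch ((ae_restrict_iff' measurableSet_Icc).2 (ae_of_all _ hbd))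
  have hUhi : IntegrableOn (fun x => U - h x) (Set.Icc 0 t) :=
    (integrableOn_const measure_Icc_lt_top.ne).sub hhi
  set J := ∫ x in Set.Icc 0 t, (U - h x) with hJ_def
  have hJ0 : 0 ≤ J := setIntegral_nonneg measurableSet_Icc hUh
  have hψlaw' : ∀ j, P.map (ψ j) = (ENNReal.ofReal (t - 0))⁻¹ • volume.restrict (Set.Icc 0 t) :=
    by simpa only [sub_zero] using hψlaw
  have hweight := gpe2Weight_nonneg hβ hγ ht.le U
  have hlint : ∫⁻ ω, ENNReal.ofReal (gpe2Weight β γ t U (κ ω)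
        * ∏ j ∈ range (κ ω), (U - h (ψ j ω))) ∂P
      = ENNReal.ofReal (Real.exp (-(U * t)) * Real.exp J) := by
    rw [lintegral_ofReal_mul_prod_range_of_indepFun_uniform hκmeas hψmeas hψindep hκψindep ht
      hψlaw' (g := fun x => U - h x) (by fun_prop) hUh hUhi hweight,
      ← ENNReal.tsum_ofReal_mul_pow_div_factorial (Real.exp_pos _).le hJ0]
    refine tsum_congr fun k => ?_
    have hterm_nonneg := mul_nonneg (hweight k) (pow_nonneg (div_nonneg hJ0 ht.le) k)
    rw [hκlaw k, sub_zero, ← ENNReal.ofReal_mul' hterm_nonneg]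
    exact congrArg _ (negBinomialPMF_mul_gpe2Weight_mul_pow hβ hγ ht.ne' U J k)
  have hnonneg : ∀ᵐ ω ∂P, 0 ≤ gpe2Weight β γ t U (κ ω) * ∏ j ∈ range (κ ω), (U - h (ψ j ω)) := by
    filter_upwards [ae_all_iff.2 fun j =>
      ae_mem_of_map_eq_smul_restrict (hψmeas j) measurableSet_Icc (hψlaw j)] with ω hω
    exact mul_nonneg (hweight _) (prod_nonneg fun j _ => hUh _ (hω j))
  have hint_meas : Measurable fun ω =>
      gpe2Weight β γ t U (κ ω) * ∏ j ∈ range (κ ω), (U - h (ψ j ω)) :=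
    measurable_apply_of_countable
      (G := fun k v => gpe2Weight β γ t U k * ∏ j ∈ range k, (U - h (v j)))
      hκmeas (measurable_pi_lambda _ hψmeas) fun k => by fun_prop
  change ∫ ω, gpe2Weight β γ t U (κ ω) * ∏ j ∈ range (κ ω), (U - h (ψ j ω)) ∂P = _
  rw [integral_eq_lintegral_of_nonneg_ae hnonneg hint_meas.aestronglyMeasurable, hlint,
    ENNReal.toReal_ofReal (by positivity), ← Real.exp_add, hJ_def,
    setIntegral_Icc_const_sub ht.le hhi, sub_zero]
  ring_nf
end
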